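/- arXiv:1009.2438 — 3 statements merged into one kernel-verified Lean document; each statement's English description precedes it below -/
import Mathlib

section
/- Let P be a probability function on a Boolean algebra B (i.e., P : B → ℝ with P(⊤) = 1, P monotone with respect to the order, and P(a ∨ b) ≤ P(a) + P(b) for all a, b). Then for all A₁, A₂, B₁, B₂ ∈ B: P(A₁ ∧ B₁) ≤ P(A₁ ∧ B₂) + P(A₂ ∧ B₁) + P(Aᶜ₂ ∧ Bᶜ₂). -/
/-- Bell-type inequality (Lemma 1): any monotone, finitely subadditive probability
function on a Boolean algebra satisfies the Bell inequality. -/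
theorem bell_inequality {B : Type*} [BooleanAlgebra B] (P : B → ℝ)
    (htop : P ⊤ = 1)
    (hmono : ∀ a b : B, a ≤ b → P a ≤ P b)
    (hsub : ∀ a b : B, P (a ⊔ b) ≤ P a + P b) :
    ∀ A₁ A₂ B₁ B₂ : B,
      P (A₁ ⊓ B₁) ≤ P (A₁ ⊓ B₂) + P (A₂ ⊓ B₁) + P (A₂ᶜ ⊓ B₂ᶜ) := by
  intro A₁ A₂ B₁ B₂
  have key : ∀ x y : B, x ≤ (x ⊓ y) ⊔ (x ⊓ yᶜ) := fun x y => by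
    rw [← inf_sup_left, sup_compl_eq_top, inf_top_eq]
  calc P (A₁ ⊓ B₁)
      ≤ P ((A₁ ⊓ B₁ ⊓ B₂) ⊔ (A₁ ⊓ B₁ ⊓ B₂ᶜ)) := hmono _ _ (key _ _)
    _ ≤ P (A₁ ⊓ B₁ ⊓ B₂) + P (A₁ ⊓ B₁ ⊓ B₂ᶜ) := hsub _ _
    _ ≤ P (A₁ ⊓ B₂) + P (A₁ ⊓ B₁ ⊓ B₂ᶜ) := by
        have : A₁ ⊓ B₁ ⊓ B₂ ≤ A₁ ⊓ B₂ := inf_le_inf_right _ inf_le_left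
        linarith [hmono _ _ this]
    _ ≤ P (A₁ ⊓ B₂) + P (((A₁ ⊓ B₁ ⊓ B₂ᶜ) ⊓ A₂) ⊔ ((A₁ ⊓ B₁ ⊓ B₂ᶜ) ⊓ A₂ᶜ)) := by
        linarith [hmono _ _ (key (A₁ ⊓ B₁ ⊓ B₂ᶜ) A₂)]
    _ ≤ P (A₁ ⊓ B₂) + (P ((A₁ ⊓ B₁ ⊓ B₂ᶜ) ⊓ A₂) + P ((A₁ ⊓ B₁ ⊓ B₂ᶜ) ⊓ A₂ᶜ)) := by
        linarith [hsub ((A₁ ⊓ B₁ ⊓ B₂ᶜ) ⊓ A₂) ((A₁ ⊓ B₁ ⊓ B₂ᶜ) ⊓ A₂ᶜ)]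
    _ ≤ P (A₁ ⊓ B₂) + P (A₂ ⊓ B₁) + P (A₂ᶜ ⊓ B₂ᶜ) := by
        have h1 : (A₁ ⊓ B₁ ⊓ B₂ᶜ) ⊓ A₂ ≤ A₂ ⊓ B₁ :=
          le_inf inf_le_right (inf_le_left.trans (inf_le_left.trans inf_le_right))
        have h2 : (A₁ ⊓ B₁ ⊓ B₂ᶜ) ⊓ A₂ᶜ ≤ A₂ᶜ ⊓ B₂ᶜ :=
          le_inf inf_le_right (inf_le_left.trans inf_le_right)
        linarith [hmono _ _ h1, hmono _ _ h2]
end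

section
/- Let H be a complex Hilbert space. The map f : 𝒫(R(H)) → 𝒟ℐ(L(H)), f(S) = {K ∈ L(H) : every ray contained in K belongs to S}, is an order isomorphism between the power set of the ray space and the lattice of distributive ideals of L(H), with inverse g(I) = the set of all rays contained in some member of I. -/
variable {H : Type*} [NormedAddCommGroup H] [InnerProductSpace ℂ H]

/-- The ray space: the set of one-dimensional subspaces (rays) of `H`. -/
def RaySp (H : Type*) [NormedAddCommGroup H] [InnerProductSpace ℂ H] :
    Set (Submodule ℂ H) :=
  {r | ∃ ψ : H, ψ ≠ 0 ∧ r = (ℂ ∙ ψ)}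

/-- The set of rays contained in a subspace `K`. -/
def rset (K : Submodule ℂ H) : Set (Submodule ℂ H) :=
  {r | ∃ ψ : H, ψ ≠ 0 ∧ ψ ∈ K ∧ r = (ℂ ∙ ψ)}

/-- The orthogonal pseudo-negation on sets of rays. -/
def pneg (S : Set (Submodule ℂ H)) : Set (Submodule ℂ H) :=
  {r | ∃ ψ : H, ψ ≠ 0 ∧ r = (ℂ ∙ ψ) ∧
    ∀ φ : H, φ ≠ 0 → (ℂ ∙ φ) ∈ S → (inner ℂ ψ φ : ℂ) = 0}

/-- `fset S` = the set of closed subspaces all of whose rays lie in `S`. -/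
def fset (S : Set (Submodule ℂ H)) : Set (Submodule ℂ H) :=
  {K | IsClosed (K : Set H) ∧ ∀ ψ : H, ψ ∈ K → ψ ≠ 0 → (ℂ ∙ ψ) ∈ S}

/-- `gset I` = the set of rays contained in some member of `I`. -/
def gset (I : Set (Submodule ℂ H)) : Set (Submodule ℂ H) :=
  {r | ∃ K ∈ I, ∃ ψ : H, ψ ≠ 0 ∧ ψ ∈ K ∧ r = (ℂ ∙ ψ)}

/-- A distributive ideal of the lattice of closed subspaces of `H`: a nonempty,
downward-closed set of closed subspaces, closed under joins that distribute over
all meets (joins of closed subspaces being closures of algebraic suprema). -/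
def IsDistIdeal (I : Set (Submodule ℂ H)) : Prop :=
  (∀ K ∈ I, IsClosed (K : Set H)) ∧ I.Nonempty ∧
  (∀ K ∈ I, ∀ K' : Submodule ℂ H, IsClosed (K' : Set H) → K' ≤ K → K' ∈ I) ∧
  (∀ 𝒦 ⊆ I, (∀ K' : Submodule ℂ H, IsClosed (K' : Set H) →
      (sSup 𝒦).topologicalClosure ⊓ K' = (⨆ K ∈ 𝒦, K ⊓ K').topologicalClosure) →
    (sSup 𝒦).topologicalClosure ∈ I)

open Classical in
/-- The weakly-Heyting implication on sets of rays, defined via atoms (singleton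
ray sets) and double pseudo-negation. -/
noncomputable def himp' (S₁ S₂ : Set (Submodule ℂ H)) : Set (Submodule ℂ H) :=
  if S₁ = ∅ then RaySp H
  else ⋂ r ∈ S₁, pneg (pneg (pneg {r} ∪ ({r} ∩ S₂)))

theorem Submodule.span_singleton_eq_of_mem {𝕜 M : Type*} [DivisionRing 𝕜] [AddCommGroup M]
    [Module 𝕜 M] {ψ φ : M} (hφ : φ ∈ 𝕜 ∙ ψ) (h0 : φ ≠ 0) : (𝕜 ∙ φ) = 𝕜 ∙ ψ := by
  obtain ⟨c, rfl⟩ := Submodule.mem_span_singleton.mp hφ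
  have hc : c ≠ 0 := by rintro rfl; simp at h0
  exact Submodule.span_singleton_smul_eq (isUnit_iff_ne_zero.mpr hc) ψ

lemma mem_fset_iff {S : Set (Submodule ℂ H)} {K : Submodule ℂ H} :
    K ∈ fset S ↔ IsClosed (K : Set H) ∧ rset K ⊆ S := by
  refine and_congr_right fun _ => ⟨?_, fun h ψ hψ h0 => h ⟨ψ, h0, hψ, rfl⟩⟩
  rintro h _ ⟨ψ, h0, hψ, rfl⟩
  exact h ψ hψ h0

lemma span_singleton_mem_fset {S : Set (Submodule ℂ H)} {ψ : H} (h : (ℂ ∙ ψ) ∈ S) :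
    (ℂ ∙ ψ) ∈ fset S :=
  ⟨Submodule.closed_of_finiteDimensional _, fun φ hφ h0 => by
    rwa [Submodule.span_singleton_eq_of_mem hφ h0]⟩

lemma fset_mono {S₁ S₂ : Set (Submodule ℂ H)} (h : S₁ ⊆ S₂) : fset S₁ ⊆ fset S₂ :=
  fun _ hK => ⟨hK.1, fun ψ hψ h0 => h (hK.2 ψ hψ h0)⟩

lemma gset_mono {I₁ I₂ : Set (Submodule ℂ H)} (h : I₁ ⊆ I₂) : gset I₁ ⊆ gset I₂ :=
  fun _ ⟨K, hK, hr⟩ => ⟨K, h hK, hr⟩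

lemma disjoint_span_singleton_of_mem_fset {S : Set (Submodule ℂ H)} {K : Submodule ℂ H}
    (hK : K ∈ fset S) {ψ : H} (h0 : ψ ≠ 0) (hψ : (ℂ ∙ ψ) ∉ S) : Disjoint K (ℂ ∙ ψ) :=
  (Submodule.disjoint_span_singleton' h0).mpr fun hψK => hψ (hK.2 ψ hψK h0)

/- A vector `ψ` in the closed join of `𝒦 ⊆ fset S` whose ray is not in `S` would meet every
member of `𝒦` trivially, so distributivity over `ℂ ∙ ψ` would force `ψ = 0`. -/
lemma isDistIdeal_fset (S : Set (Submodule ℂ H)) : IsDistIdeal (fset S) := by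
  refine ⟨fun K hK => hK.1, ⟨⊥, Submodule.closed_of_finiteDimensional _, fun ψ hψ h0 =>
    absurd ((Submodule.mem_bot ℂ).mp hψ) h0⟩, fun K hK K' hK' hle =>
    ⟨hK', fun ψ hψ h0 => hK.2 ψ (hle hψ) h0⟩, ?_⟩
  intro 𝒦 h𝒦 hdist
  refine ⟨Submodule.isClosed_topologicalClosure _, fun ψ hψ h0 => ?_⟩
  by_contra hS
  have hbot : (⨆ K ∈ 𝒦, K ⊓ (ℂ ∙ ψ)) = ⊥ :=
    iSup₂_eq_bot.mpr fun K hK => (disjoint_span_singleton_of_mem_fset (h𝒦 hK) h0 hS).eq_bot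
  have hmeet := hdist (ℂ ∙ ψ) (Submodule.closed_of_finiteDimensional _)
  rw [hbot, (Submodule.closed_of_finiteDimensional ⊥).submodule_topologicalClosure_eq] at hmeet
  have hψmeet : ψ ∈ (sSup 𝒦).topologicalClosure ⊓ (ℂ ∙ ψ) :=
    ⟨hψ, Submodule.mem_span_singleton_self ψ⟩
  exact h0 ((Submodule.mem_bot ℂ).mp (hmeet ▸ hψmeet))

lemma sSup_rset (K : Submodule ℂ H) : sSup (rset K) = K := by
  refine le_antisymm (sSup_le ?_) fun x hx => ?_
  · rintro _ ⟨ψ, -, hψ, rfl⟩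
    exact (Submodule.span_singleton_le_iff_mem ψ K).mpr hψ
  · rcases eq_or_ne x 0 with rfl | hx0
    · exact Submodule.zero_mem _
    · exact le_sSup (show (ℂ ∙ x) ∈ rset K from ⟨x, hx0, hx, rfl⟩)
        (Submodule.mem_span_singleton_self x)

lemma iSup_rset_inf (K K' : Submodule ℂ H) : (⨆ L ∈ rset K, L ⊓ K') = K ⊓ K' := by
  refine le_antisymm (iSup₂_le fun L hL => inf_le_inf_right K' (sSup_rset K ▸ le_sSup hL)) ?_
  rw [← sSup_rset (K ⊓ K')]
  refine sSup_le ?_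
  rintro _ ⟨ψ, h0, hψ, rfl⟩
  refine le_trans ?_ (le_iSup₂ (f := fun L (_ : L ∈ rset K) => L ⊓ K') _ ⟨ψ, h0, hψ.1, rfl⟩)
  exact le_inf le_rfl ((Submodule.span_singleton_le_iff_mem ψ K').mpr hψ.2)

lemma gset_fset {S : Set (Submodule ℂ H)} (hS : S ⊆ RaySp H) : gset (fset S) = S := by
  refine subset_antisymm (fun _ ⟨K, hK, ψ, h0, hψ, hr⟩ => hr ▸ hK.2 ψ hψ h0) fun r hr => ?_
  obtain ⟨ψ, h0, rfl⟩ := hS hr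
  exact ⟨ℂ ∙ ψ, span_singleton_mem_fset hr, ψ, h0, Submodule.mem_span_singleton_self ψ, rfl⟩

lemma gset_subset_raySp (I : Set (Submodule ℂ H)) : gset I ⊆ RaySp H :=
  fun _ ⟨_, _, ψ, h0, _, hr⟩ => ⟨ψ, h0, hr⟩

lemma gset_subset_of_isDistIdeal {I : Set (Submodule ℂ H)} (hI : IsDistIdeal I) : gset I ⊆ I :=
  fun _ ⟨K, hK, ψ, _, hψ, hr⟩ => hr ▸ hI.2.2.1 K hK _ (Submodule.closed_of_finiteDimensional _)
    ((Submodule.span_singleton_le_iff_mem ψ K).mpr hψ)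

/- A closed subspace all of whose rays lie in `I` is the join of those rays, a join which
distributes over every closed subspace. -/
lemma fset_gset {I : Set (Submodule ℂ H)} (hI : IsDistIdeal I) : fset (gset I) = I := by
  refine subset_antisymm (fun K hK => ?_) fun K hK =>
    ⟨hI.1 K hK, fun ψ hψ h0 => ⟨K, hK, ψ, h0, hψ, rfl⟩⟩
  obtain ⟨hKcl, hrays⟩ := mem_fset_iff.mp hK
  have hjoin := hI.2.2.2 (rset K) (hrays.trans (gset_subset_of_isDistIdeal hI)) fun K' hK'cl => by
    rw [sSup_rset, iSup_rset_inf, hKcl.submodule_topologicalClosure_eq,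
      IsClosed.submodule_topologicalClosure_eq (hKcl.inter hK'cl)]
  rwa [sSup_rset, hKcl.submodule_topologicalClosure_eq] at hjoin

theorem fset_orderIso_general :
    (∀ S : Set (Submodule ℂ H), S ⊆ RaySp H → IsDistIdeal (fset S)) ∧
    (∀ S : Set (Submodule ℂ H), S ⊆ RaySp H → gset (fset S) = S) ∧
    (∀ I : Set (Submodule ℂ H), IsDistIdeal I →
      gset I ⊆ RaySp H ∧ fset (gset I) = I) ∧
    (∀ S₁ S₂ : Set (Submodule ℂ H), S₁ ⊆ RaySp H → S₂ ⊆ RaySp H →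
      (S₁ ⊆ S₂ ↔ fset S₁ ⊆ fset S₂)) := by
  refine ⟨fun S _ => isDistIdeal_fset S, fun S hS => gset_fset hS,
    fun I hI => ⟨gset_subset_raySp I, fset_gset hI⟩, fun S₁ S₂ h₁ h₂ => ⟨fset_mono, fun h => ?_⟩⟩
  rw [← gset_fset h₁, ← gset_fset h₂]
  exact gset_mono h

/-- `fset` is an order isomorphism from the power set of the ray space onto the
distributive ideals of the lattice of closed subspaces, with inverse `gset`. -/
theorem fset_orderIso [CompleteSpace H] :
    (∀ S : Set (Submodule ℂ H), S ⊆ RaySp H → IsDistIdeal (fset S)) ∧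
    (∀ S : Set (Submodule ℂ H), S ⊆ RaySp H → gset (fset S) = S) ∧
    (∀ I : Set (Submodule ℂ H), IsDistIdeal I →
      gset I ⊆ RaySp H ∧ fset (gset I) = I) ∧
    (∀ S₁ S₂ : Set (Submodule ℂ H), S₁ ⊆ RaySp H → S₂ ⊆ RaySp H →
      (S₁ ⊆ S₂ ↔ fset S₁ ⊆ fset S₂)) :=
  fset_orderIso_general
end

section
/- With the implication S₁ → S₂ defined via atoms and double pseudo-negation on 𝒫(R(H)), for all S₁, S₂, S₃ ⊆ R(H): S₁ → (S₂ ∩ S₃) = (S₁ → S₂) ∩ (S₁ → S₃). -/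
variable {H : Type*} [NormedAddCommGroup H] [InnerProductSpace ℂ H]

/-! For a ray `r` the set `{r} ∩ X` is either `{r}` or `∅`, and triple pseudo-negation equals
single pseudo-negation, so the atomic implication `pneg (pneg (pneg {r} ∪ ({r} ∩ X)))` takes only
the two values `pneg {r} ⊆ pneg (pneg (pneg {r} ∪ {r}))`, the larger one exactly when `r ∈ X`.
A function of `X` of this shape preserves intersections, and so does the intersection over
`r ∈ S₁`. -/

section PseudoNegation

variable {S T : Set (Submodule ℂ H)}

lemma pneg_subset_raySp (S : Set (Submodule ℂ H)) : pneg S ⊆ RaySp H :=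
  fun _ ⟨ψ, hψ, hr, _⟩ => ⟨ψ, hψ, hr⟩

lemma pneg_anti (h : S ⊆ T) : pneg T ⊆ pneg S :=
  fun _ ⟨ψ, hψ, hr, hp⟩ => ⟨ψ, hψ, hr, fun φ hφ hφS => hp φ hφ (h hφS)⟩

lemma subset_pneg_pneg (hS : S ⊆ RaySp H) : S ⊆ pneg (pneg S) := by
  intro r hr
  obtain ⟨ψ, hψ, rfl⟩ := hS hr
  refine ⟨ψ, hψ, rfl, ?_⟩
  rintro φ hφ ⟨χ, hχ, hspan, hχψ⟩
  obtain ⟨c, rfl⟩ : ∃ c : ℂ, c • χ = φ :=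
    Submodule.mem_span_singleton.mp (hspan ▸ Submodule.mem_span_singleton_self φ)
  rw [inner_smul_right, inner_eq_zero_symm.mp (hχψ ψ hψ hr), mul_zero]

lemma pneg_pneg_pneg (hS : S ⊆ RaySp H) : pneg (pneg (pneg S)) = pneg S :=
  (pneg_anti (subset_pneg_pneg hS)).antisymm (subset_pneg_pneg (pneg_subset_raySp S))

lemma subset_pneg_pneg_of_subset (hS : S ⊆ RaySp H) (h : S ⊆ T) : S ⊆ pneg (pneg T) :=
  (subset_pneg_pneg hS).trans (pneg_anti (pneg_anti h))

end PseudoNegation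

section AtomicImplication

variable {r : Submodule ℂ H}

open Classical in
lemma pneg_pneg_pneg_singleton_union_inter (hr : r ∈ RaySp H) (X : Set (Submodule ℂ H)) :
    pneg (pneg (pneg {r} ∪ ({r} ∩ X))) =
      if r ∈ X then pneg (pneg (pneg {r} ∪ {r})) else pneg {r} := by
  split_ifs with hX
  · rw [Set.inter_eq_left.mpr (Set.singleton_subset_iff.mpr hX)]
  · rw [Set.singleton_inter_eq_empty.mpr hX, Set.union_empty,
      pneg_pneg_pneg (Set.singleton_subset_iff.mpr hr)]

lemma pneg_singleton_subset_pneg_pneg_union (r : Submodule ℂ H) :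
    pneg {r} ⊆ pneg (pneg (pneg {r} ∪ {r})) :=
  subset_pneg_pneg_of_subset (pneg_subset_raySp _) Set.subset_union_left

lemma pneg_pneg_pneg_singleton_union_inter_inter (hr : r ∈ RaySp H)
    (X Y : Set (Submodule ℂ H)) :
    pneg (pneg (pneg {r} ∪ ({r} ∩ (X ∩ Y)))) =
      pneg (pneg (pneg {r} ∪ ({r} ∩ X))) ∩ pneg (pneg (pneg {r} ∪ ({r} ∩ Y))) := by
  have hsub := pneg_singleton_subset_pneg_pneg_union r
  simp only [pneg_pneg_pneg_singleton_union_inter hr, Set.mem_inter_iff]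
  split_ifs <;> simp_all [Set.inter_eq_left.mpr, Set.inter_eq_right.mpr]

end AtomicImplication

theorem himp_inter_right_general
    (S₁ S₂ S₃ : Set (Submodule ℂ H))
    (h₁ : S₁ ⊆ RaySp H) :
    himp' S₁ (S₂ ∩ S₃) = himp' S₁ S₂ ∩ himp' S₁ S₃ := by
  unfold himp'
  split_ifs
  · exact (Set.inter_self _).symm
  · rw [← Set.iInter_inter_distrib]
    refine Set.iInter_congr fun r => ?_
    rw [← Set.iInter_inter_distrib]
    exact Set.iInter_congr fun hr => pneg_pneg_pneg_singleton_union_inter_inter (h₁ hr) S₂ S₃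

/-- The atomic implication distributes over meets in the consequent:
`S₁ → (S₂ ∩ S₃) = (S₁ → S₂) ∩ (S₁ → S₃)`. -/
theorem himp_inter_right [CompleteSpace H]
    (S₁ S₂ S₃ : Set (Submodule ℂ H))
    (h₁ : S₁ ⊆ RaySp H) (h₂ : S₂ ⊆ RaySp H) (h₃ : S₃ ⊆ RaySp H) :
    himp' S₁ (S₂ ∩ S₃) = himp' S₁ S₂ ∩ himp' S₁ S₃ :=
  himp_inter_right_general S₁ S₂ S₃ h₁
end
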